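/- arXiv:2306.02132 — 4 statements merged into one kernel-verified Lean document; each statement's English description precedes it below -/
import Mathlib

section
/- For every N ≥ 2, the intersection P_N ∩ H of the crosspolytope with the hyperplane H equals the convex hull of the finite set V = {(e_p − e_q)/2 : p, q ∈ {1,…,N}, p ≠ q}. -/
open Finset

/-- The crosspolytope `P_N = {x ∈ ℝ^N : ∑ |x i| ≤ 1}`. -/
def crossPolytope (N : ℕ) : Set (Fin N → ℝ) := {x | ∑ i, |x i| ≤ 1}

/-- The hyperplane `H = {x ∈ ℝ^N : ∑ x i = 0}`. -/
def hyperplaneH (N : ℕ) : Set (Fin N → ℝ) := {x | ∑ i, x i = 0}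

/-- The vertex set `V = {(e_p − e_q)/2 : p ≠ q}`. -/
def vertexSetV (N : ℕ) : Set (Fin N → ℝ) :=
  {v | ∃ p q : Fin N, p ≠ q ∧ v = (1 / 2 : ℝ) • (Pi.single p 1 - Pi.single q 1)}

/-!
`P_N ∩ H` is convex and contains `V`. Conversely, split `x ∈ P_N ∩ H` as `x⁺ - x⁻`: since
`∑ x = 0`, both parts have the same mass `s`, and `2 s = ∑ |x i| ≤ 1`. Then
`x = ∑_{p,q} (2 x⁺_p x⁻_q / s) • (e_p - e_q) / 2` with weights of total mass `2 s ≤ 1`, and the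
remaining mass, like the terms with `p = q`, goes to `0 = (v + (-v)) / 2 ∈ conv V`.
-/

theorem Convex.sum_smul_mem_of_sum_le_one {R E ι : Type*} [Field R] [LinearOrder R]
    [IsStrictOrderedRing R] [AddCommGroup E] [Module R E] {s : Set E} {t : Finset ι}
    {w : ι → R} {z : ι → E} (hs : Convex R s) (h₀ : 0 ∈ s) (hw₀ : ∀ i ∈ t, 0 ≤ w i)
    (hw₁ : ∑ i ∈ t, w i ≤ 1) (hz : ∀ i ∈ t, z i ∈ s) : ∑ i ∈ t, w i • z i ∈ s := by
  rcases (sum_nonneg hw₀).eq_or_lt with hW | hW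
  · rw [sum_eq_zero fun i hi => by rw [(sum_eq_zero_iff_of_nonneg hw₀).1 hW.symm i hi, zero_smul]]
    exact h₀
  · have := hs.smul_mem_of_zero_mem h₀ (hs.centerMass_mem hw₀ hW hz) ⟨hW.le, hw₁⟩
    rwa [centerMass, smul_inv_smul₀ hW.ne'] at this

section

variable {ι : Type*} [Fintype ι] {x : ι → ℝ}

theorem sum_negPart_eq_sum_posPart (hx : ∑ i, x i = 0) : ∑ i, (x i)⁻ = ∑ i, (x i)⁺ := by
  rw [← sum_congr rfl fun i _ => posPart_sub_negPart (x i), sum_sub_distrib, sub_eq_zero] at hx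
  exact hx.symm

theorem sum_abs_eq_two_mul_sum_posPart (hx : ∑ i, x i = 0) :
    ∑ i, |x i| = 2 * ∑ i, (x i)⁺ := by
  rw [← sum_congr rfl fun i _ => posPart_add_negPart (x i), sum_add_distrib,
    sum_negPart_eq_sum_posPart hx, two_mul]

theorem sum_smul_sub_sum_smul_eq_sum_smul_single_sub_single [DecidableEq ι] (a b : ι → ℝ) :
    (∑ i, b i) • a - (∑ i, a i) • b =
      ∑ pq : ι × ι, (a pq.1 * b pq.2) • (Pi.single pq.1 1 - Pi.single pq.2 1 : ι → ℝ) := by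
  ext j
  simp only [Pi.sub_apply, Pi.smul_apply, smul_eq_mul, Finset.sum_apply, Pi.single_apply, mul_sub,
    mul_ite, mul_one, mul_zero, sum_sub_distrib, Fintype.sum_prod_type, sum_ite_irrel, ← mul_sum,
    sum_const_zero, sum_ite_eq, mem_univ, ↓reduceIte, ← sum_mul]
  ring

theorem sum_posPart_smul_eq_sum_smul_single_sub_single [DecidableEq ι] (hx : ∑ i, x i = 0) :
    (∑ i, (x i)⁺) • x =
      ∑ pq : ι × ι, ((x pq.1)⁺ * (x pq.2)⁻) • (Pi.single pq.1 1 - Pi.single pq.2 1 : ι → ℝ) := by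
  rw [← sum_smul_sub_sum_smul_eq_sum_smul_single_sub_single (fun i => (x i)⁺) fun i => (x i)⁻,
    sum_negPart_eq_sum_posPart hx, ← smul_sub]
  congr
  exact funext fun i => (posPart_sub_negPart (x i)).symm

end

theorem convex_crossPolytope (N : ℕ) : Convex ℝ (crossPolytope N) := by
  intro x hx y hy a b ha hb hab
  calc ∑ i, |a * x i + b * y i|
      ≤ ∑ i, (a * |x i| + b * |y i|) := sum_le_sum fun i _ => (abs_add_le _ _).trans_eq <| by
        rw [abs_mul, abs_mul, abs_of_nonneg ha, abs_of_nonneg hb]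
    _ = a * ∑ i, |x i| + b * ∑ i, |y i| := by rw [sum_add_distrib, mul_sum, mul_sum]
    _ ≤ a * 1 + b * 1 := by gcongr <;> assumption
    _ = 1 := by rw [mul_one, mul_one, hab]

theorem convex_hyperplaneH (N : ℕ) : Convex ℝ (hyperplaneH N) :=
  convex_hyperplane ⟨fun _ _ => sum_add_distrib, fun _ _ => (mul_sum _ _ _).symm⟩ 0

theorem single_mem_crossPolytope {N : ℕ} (p : Fin N) {c : ℝ} (hc : |c| ≤ 1) :
    Pi.single p c ∈ crossPolytope N := by
  simpa [crossPolytope, Pi.single_apply, apply_ite] using hc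

theorem half_smul_single_sub_single_mem_crossPolytope_inter_hyperplaneH {N : ℕ} (p q : Fin N) :
    (1 / 2 : ℝ) • (Pi.single p 1 - Pi.single q 1) ∈ crossPolytope N ∩ hyperplaneH N := by
  refine ⟨?_, ?_⟩
  · have := convex_crossPolytope N (single_mem_crossPolytope p (c := 1) (by simp))
      (single_mem_crossPolytope q (c := -1) (by simp)) (by norm_num : (0 : ℝ) ≤ 1 / 2)
      (by norm_num : (0 : ℝ) ≤ 1 / 2) (by norm_num)
    rwa [← smul_add, Pi.single_neg, ← sub_eq_add_neg] at this
  · simp [hyperplaneH, Pi.single_apply, ← mul_sum, sum_sub_distrib]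

theorem zero_mem_convexHull_vertexSetV {N : ℕ} (hN : 2 ≤ N) :
    (0 : Fin N → ℝ) ∈ convexHull ℝ (vertexSetV N) := by
  obtain ⟨p, q, hpq⟩ : ∃ p q : Fin N, p ≠ q := ⟨⟨0, by omega⟩, ⟨1, by omega⟩, by simp⟩
  have := convex_convexHull ℝ (vertexSetV N) (subset_convexHull ℝ _ ⟨p, q, hpq, rfl⟩)
    (subset_convexHull ℝ _ ⟨q, p, hpq.symm, rfl⟩) (by norm_num : (0 : ℝ) ≤ 1 / 2)
    (by norm_num : (0 : ℝ) ≤ 1 / 2) (by norm_num)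
  rwa [← neg_sub (Pi.single p 1), smul_neg, ← smul_add, add_neg_cancel, smul_zero] at this

theorem crossPolytope_inter_hyperplaneH_subset_convexHull {N : ℕ} (hN : 2 ≤ N) :
    crossPolytope N ∩ hyperplaneH N ⊆ convexHull ℝ (vertexSetV N) := by
  rintro x ⟨hx₁ : ∑ i, |x i| ≤ 1, hx₀ : ∑ i, x i = 0⟩
  have h₀ := zero_mem_convexHull_vertexSetV hN
  set s := ∑ i, (x i)⁺
  have h2s : 2 * s ≤ 1 := sum_abs_eq_two_mul_sum_posPart hx₀ ▸ hx₁
  rcases (sum_nonneg fun i _ => posPart_nonneg (x i) : 0 ≤ s).eq_or_lt with hs | hs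
  · have hx : x = 0 := funext fun i => abs_eq_zero.1 <|
      (sum_eq_zero_iff_of_nonneg fun i _ => abs_nonneg (x i)).1
        (by rw [sum_abs_eq_two_mul_sum_posPart hx₀, ← hs, mul_zero]) i (mem_univ i)
    rwa [hx]
  have hx_eq : x = ∑ pq : Fin N × Fin N, (2 / s * ((x pq.1)⁺ * (x pq.2)⁻)) •
      ((1 / 2 : ℝ) • (Pi.single pq.1 1 - Pi.single pq.2 1)) :=
    calc x = s⁻¹ • (s • x) := (inv_smul_smul₀ hs.ne' x).symm
      _ = _ := by
        rw [sum_posPart_smul_eq_sum_smul_single_sub_single hx₀, smul_sum]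
        refine sum_congr rfl fun pq _ => ?_
        rw [smul_smul, smul_smul]
        field_simp
  rw [hx_eq]
  refine (convex_convexHull ℝ _).sum_smul_mem_of_sum_le_one h₀
    (fun pq _ => by have := posPart_nonneg (x pq.1); have := negPart_nonneg (x pq.2); positivity)
    ?_ fun ⟨p, q⟩ _ => ?_
  · rw [← mul_sum, Fintype.sum_prod_type]
    dsimp only
    rw [← sum_mul_sum, sum_negPart_eq_sum_posPart hx₀, div_mul_eq_mul_div, div_le_one hs]
    nlinarith
  · rcases eq_or_ne p q with rfl | hpq
    · rwa [sub_self, smul_zero]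
    · exact subset_convexHull ℝ _ ⟨p, q, hpq, rfl⟩

theorem crossPolytope_inter_hyperplane_eq_convexHull (N : ℕ) (hN : 2 ≤ N) :
    crossPolytope N ∩ hyperplaneH N = convexHull ℝ (vertexSetV N) :=
  (crossPolytope_inter_hyperplaneH_subset_convexHull hN).antisymm <| convexHull_min
    (fun _ ⟨p, q, _, hv⟩ => hv ▸ half_smul_single_sub_single_mem_crossPolytope_inter_hyperplaneH p q)
    ((convex_crossPolytope N).inter (convex_hyperplaneH N))
end

section
/- For every N ≥ 2, the set of extreme points of P_N ∩ H equals V = {(e_p − e_q)/2 : p, q ∈ {1,…,N}, p ≠ q}. -/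
/-!
The vertex `v = (e_p - e_q)/2` is the unique maximiser on `P_N ∩ H` of the functional
`x ↦ x_p - x_q`, which is bounded by `‖x‖₁ ≤ 1`; so `v` is exposed, hence extreme.

Conversely, moving mass `t` from coordinate `q` to coordinate `p` stays in `H` and changes `‖x‖₁`
only through the two coordinates involved. If `‖x‖₁ < 1`, or if `x_p, x_q` are nonzero of the
same sign, small moves in both directions stay in `P_N`, so `x` is not extreme. An extreme point
therefore has `‖x‖₁ = 1` and at most one positive and one negative coordinate; as its
coordinates sum to zero, it is `(e_p - e_q)/2`.
-/

open Finset

lemma eq_zero_of_mem_extremePoints_of_add_mem_of_sub_mem {E : Type*} [AddCommGroup E]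
    [Module ℝ E] {A : Set E} {x y : E} (hx : x ∈ A.extremePoints ℝ) (hadd : x + y ∈ A)
    (hsub : x - y ∈ A) : y = 0 :=
  add_eq_left.1 (hx.2 hadd hsub (mem_openSegment_add_sub x y))

lemma abs_add_add_abs_sub_of_mul_pos {a b t : ℝ} (hab : 0 < a * b) (hta : |t| ≤ |a|)
    (htb : |t| ≤ |b|) : |a + t| + |b - t| = |a| + |b| := by
  rcases mul_pos_iff.1 hab with ⟨ha, hb⟩ | ⟨ha, hb⟩
  · rw [abs_of_pos ha] at hta
    rw [abs_of_pos hb] at htb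
    rw [abs_of_pos ha, abs_of_pos hb, abs_of_nonneg (by linarith [neg_abs_le t]),
      abs_of_nonneg (by linarith [le_abs_self t])]
    ring
  · rw [abs_of_neg ha] at hta
    rw [abs_of_neg hb] at htb
    rw [abs_of_neg ha, abs_of_neg hb, abs_of_nonpos (by linarith [le_abs_self t]),
      abs_of_nonpos (by linarith [neg_abs_le t])]
    ring

section SumAbs

variable {ι : Type*} [Fintype ι] {p q : ι}

lemma sub_le_sum_abs (hpq : p ≠ q) (x : ι → ℝ) : x p - x q ≤ ∑ i, |x i| := by
  classical
  calc x p - x q ≤ |x p| + |x q| := by linarith [le_abs_self (x p), neg_le_abs (x q)]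
    _ = ∑ i ∈ {p, q}, |x i| := by rw [sum_pair hpq]
    _ ≤ ∑ i, |x i| := sum_le_univ_sum_of_nonneg fun i => abs_nonneg (x i)

variable [DecidableEq ι]

lemma eq_half_smul_single_sub_single_of_sub_eq_one (hpq : p ≠ q) {x : ι → ℝ}
    (hK : ∑ i, |x i| ≤ 1) (hH : ∑ i, x i = 0) (hx : x p - x q = 1) :
    x = (1 / 2 : ℝ) • (Pi.single p 1 - Pi.single q 1) := by
  have hsplit := sum_add_sum_compl {p, q} fun i => |x i|
  rw [sum_pair hpq] at hsplit
  have hrest : ∀ i ∈ ({p, q} : Finset ι)ᶜ, |x i| = 0 :=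
    (sum_eq_zero_iff_of_nonneg fun i _ => abs_nonneg (x i)).1 <| le_antisymm
      (by linarith [le_abs_self (x p), neg_le_abs (x q)]) (sum_nonneg fun i _ => abs_nonneg (x i))
  have hzero : ∀ i, i ≠ p ∧ i ≠ q → x i = 0 := fun i ⟨hip, hiq⟩ =>
    abs_eq_zero.1 (hrest i (by simp [hip, hiq]))
  have hpq_sum : x p + x q = 0 := by rwa [Fintype.sum_eq_add p q hpq hzero] at hH
  have hxp : x p = 1 / 2 := by linarith
  have hxq : x q = -(1 / 2) := by linarith
  ext i
  rcases eq_or_ne i p with rfl | hip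
  · simp [hpq, hxp]
  rcases eq_or_ne i q with rfl | hiq
  · simp [Ne.symm hpq, hxq]
  simp [hip, hiq, hzero i ⟨hip, hiq⟩]

lemma sum_add_smul_single_sub_single (x : ι → ℝ) (p q : ι) (t : ℝ) :
    ∑ i, (x + t • (Pi.single p 1 - Pi.single q 1) : ι → ℝ) i = ∑ i, x i := by
  simp [sum_add_distrib, ← mul_sum]

lemma sum_abs_add_smul_single_sub_single (hpq : p ≠ q) (x : ι → ℝ) (t : ℝ) :
    ∑ i, |(x + t • (Pi.single p 1 - Pi.single q 1) : ι → ℝ) i|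
      = ∑ i, |x i| + (|x p + t| - |x p|) + (|x q - t| - |x q|) := by
  have h := Fintype.sum_eq_add p q hpq
    (f := fun i => |(x + t • (Pi.single p 1 - Pi.single q 1) : ι → ℝ) i| - |x i|)
    fun i ⟨hip, hiq⟩ => by simp [hip, hiq]
  have hp : (x + t • (Pi.single p 1 - Pi.single q 1) : ι → ℝ) p = x p + t := by simp [hpq]
  have hq : (x + t • (Pi.single p 1 - Pi.single q 1) : ι → ℝ) q = x q - t := by
    simp [Ne.symm hpq, sub_eq_add_neg]
  rw [sum_sub_distrib, hp, hq] at h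
  linarith

end SumAbs

section CrossPolytope

variable {N : ℕ} {x : Fin N → ℝ} {p q : Fin N}

lemma half_smul_single_sub_single_mem (hpq : p ≠ q) :
    (1 / 2 : ℝ) • (Pi.single p 1 - Pi.single q 1) ∈ crossPolytope N ∩ hyperplaneH N := by
  constructor
  · show ∑ i, |((1 / 2 : ℝ) • (Pi.single p 1 - Pi.single q 1) : Fin N → ℝ) i| ≤ 1
    rw [Fintype.sum_eq_add p q hpq fun i ⟨hip, hiq⟩ => by simp [hip, hiq]]
    norm_num [hpq, Ne.symm hpq]
  · show ∑ i, ((1 / 2 : ℝ) • (Pi.single p 1 - Pi.single q 1) : Fin N → ℝ) i = 0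
    simpa using sum_add_smul_single_sub_single 0 p q (1 / 2)

lemma vertexSetV_subset_exposedPoints :
    vertexSetV N ⊆ (crossPolytope N ∩ hyperplaneH N).exposedPoints ℝ := by
  rintro _ ⟨p, q, hpq, rfl⟩
  refine ⟨half_smul_single_sub_single_mem hpq,
    ContinuousLinearMap.proj (R := ℝ) (φ := fun _ => ℝ) p - ContinuousLinearMap.proj q,
    fun y hy => ?_⟩
  have hv : ((1 / 2 : ℝ) • (Pi.single p 1 - Pi.single q 1) : Fin N → ℝ) p
      - ((1 / 2 : ℝ) • (Pi.single p 1 - Pi.single q 1) : Fin N → ℝ) q = 1 := by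
    norm_num [hpq, Ne.symm hpq]
  have hy' : y p - y q ≤ 1 := (sub_le_sum_abs hpq y).trans hy.1
  simp only [sub_apply, ContinuousLinearMap.proj_apply, hv]
  exact ⟨hy', fun h => eq_half_smul_single_sub_single_of_sub_eq_one hpq hy.1 hy.2 (hy'.antisymm h)⟩

lemma add_smul_single_sub_single_mem (hpq : p ≠ q) (hH : x ∈ hyperplaneH N) {t : ℝ}
    (ht : ∑ i, |x i| + (|x p + t| - |x p|) + (|x q - t| - |x q|) ≤ 1) :
    x + t • (Pi.single p 1 - Pi.single q 1) ∈ crossPolytope N ∩ hyperplaneH N :=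
  ⟨(sum_abs_add_smul_single_sub_single hpq x t).trans_le ht,
    (sum_add_smul_single_sub_single x p q t).trans hH⟩

lemma notMem_extremePoints_of_forall_abs_eq (hpq : p ≠ q) (hH : x ∈ hyperplaneH N) {ε : ℝ}
    (hε : 0 < ε) (h : ∀ t, |t| = ε → ∑ i, |x i| + (|x p + t| - |x p|) + (|x q - t| - |x q|) ≤ 1) :
    x ∉ (crossPolytope N ∩ hyperplaneH N).extremePoints ℝ := by
  intro hx
  have hadd := add_smul_single_sub_single_mem hpq hH (h ε (abs_of_pos hε))
  have hsub := add_smul_single_sub_single_mem hpq hH (h (-ε) (by rw [abs_neg, abs_of_pos hε]))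
  rw [neg_smul, ← sub_eq_add_neg] at hsub
  have hp := congrFun (eq_zero_of_mem_extremePoints_of_add_mem_of_sub_mem hx hadd hsub) p
  exact hε.ne' (by simpa [hpq] using hp)

lemma sum_abs_eq_one_of_mem_extremePoints (hN : 2 ≤ N)
    (hx : x ∈ (crossPolytope N ∩ hyperplaneH N).extremePoints ℝ) : ∑ i, |x i| = 1 := by
  have : Nontrivial (Fin N) := Fin.nontrivial_iff_two_le.2 hN
  obtain ⟨p, q, hpq⟩ := exists_pair_ne (Fin N)
  refine hx.1.1.eq_or_lt.resolve_right fun hlt => ?_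
  refine notMem_extremePoints_of_forall_abs_eq hpq hx.1.2 (ε := (1 - ∑ i, |x i|) / 2)
    (by linarith) (fun t ht => ?_) hx
  linarith [abs_add_le (x p) t, abs_sub (x q) t]

lemma mul_nonpos_of_mem_extremePoints (hpq : p ≠ q)
    (hx : x ∈ (crossPolytope N ∩ hyperplaneH N).extremePoints ℝ) : x p * x q ≤ 0 := by
  by_contra! hpos
  have hp : x p ≠ 0 := left_ne_zero_of_mul hpos.ne'
  have hq : x q ≠ 0 := right_ne_zero_of_mul hpos.ne'
  refine notMem_extremePoints_of_forall_abs_eq hpq hx.1.2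
    (lt_min (abs_pos.2 hp) (abs_pos.2 hq)) (fun t ht => ?_) hx
  have hK : ∑ i, |x i| ≤ 1 := hx.1.1
  linarith [abs_add_add_abs_sub_of_mul_pos hpos (ht.trans_le (min_le_left _ _))
    (ht.trans_le (min_le_right _ _))]

lemma extremePoints_subset_vertexSetV (hN : 2 ≤ N) :
    (crossPolytope N ∩ hyperplaneH N).extremePoints ℝ ⊆ vertexSetV N := by
  intro x hx
  have hK := sum_abs_eq_one_of_mem_extremePoints hN hx
  have hH : ∑ i, x i = 0 := hx.1.2
  have hne : ∃ i ∈ univ, x i ≠ 0 := by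
    by_contra! h
    simp [h] at hK
  obtain ⟨p, -, hp⟩ := exists_pos_of_sum_zero_of_exists_nonzero (s := univ) x hH hne
  obtain ⟨q, -, hq⟩ := exists_pos_of_sum_zero_of_exists_nonzero (s := univ) (-x)
    (by simp [sum_neg_distrib, hH]) (by simpa using hne)
  rw [Pi.neg_apply, neg_pos] at hq
  have hpq : p ≠ q := by
    rintro rfl
    exact hp.not_gt hq
  have hzero : ∀ i, i ≠ p ∧ i ≠ q → |x i| = 0 := fun i ⟨hip, hiq⟩ => by
    rw [abs_eq_zero]
    exact le_antisymm (nonpos_of_mul_nonpos_left (mul_nonpos_of_mem_extremePoints hip hx) hp)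
      (nonneg_of_mul_nonpos_left (mul_nonpos_of_mem_extremePoints hiq hx) hq)
  have hnorm := hK
  rw [Fintype.sum_eq_add p q hpq hzero, abs_of_pos hp, abs_of_neg hq] at hnorm
  exact ⟨p, q, hpq, eq_half_smul_single_sub_single_of_sub_eq_one hpq hK.le hH (by linarith)⟩

end CrossPolytope

theorem extremePoints_crossPolytope_inter_hyperplane (N : ℕ) (hN : 2 ≤ N) :
    Set.extremePoints ℝ (crossPolytope N ∩ hyperplaneH N) = vertexSetV N :=
  (extremePoints_subset_vertexSetV hN).antisymm
    (vertexSetV_subset_exposedPoints.trans exposedPoints_subset_extremePoints)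
end

section
/- Let α ∈ (0, 1/2], β ∈ [0, α/2), and let S be an (α,β)-admissible N×N real matrix. Then for every pair of distinct row indices p, q, it holds that ∑_{i=1}^N min{S_{pi}, S_{qi}} ≥ α − 2β. -/
/-!
Entrywise, `min (S p i) (S q i)` is at least the sum of the negative parts `min (S p i) 0` and
`min (S q i) 0`; at a shared column, where both entries are at least `α`, it is even at least `α`
plus them. Summing over the columns gives `α` plus the negative masses of rows `p` and `q`,
each of which is at least `-β`.
-/

open Finset

/-- An `N × N` real matrix `S` is `(α,β)`-admissible if every row sums to `1`,
the negative part of every row sums to at least `-β`, and every pair of distinct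
rows shares a column where both entries are at least `α` (neighbor-shared). -/
def Admissible {N : ℕ} (α β : ℝ) (S : Matrix (Fin N) (Fin N) ℝ) : Prop :=
  (∀ i, ∑ j, S i j = 1) ∧ (∀ i, -β ≤ ∑ j, min (S i j) 0) ∧
    (∀ p q : Fin N, p ≠ q → ∃ i, α ≤ S p i ∧ α ≤ S q i)

section

variable {R : Type*} [AddCommGroup R] [LinearOrder R] [IsOrderedAddMonoid R]

theorem min_zero_add_min_zero_le_min (a b : R) : min a 0 + min b 0 ≤ min a b :=
  le_min (add_le_of_le_of_nonpos (min_le_left a 0) (min_le_right b 0))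
    (add_le_of_nonpos_of_le (min_le_right a 0) (min_le_left b 0))

theorem add_min_zero_add_min_zero_le_min {a b c : R} (hc : c ≤ min a b) :
    c + (min a 0 + min b 0) ≤ min a b :=
  add_le_of_le_of_nonpos hc (add_nonpos (min_le_right a 0) (min_le_right b 0))

theorem add_sum_min_zero_add_sum_min_zero_le_sum_min {ι : Type*} [Fintype ι] [DecidableEq ι]
    {a b : ι → R} {c : R} {i₀ : ι} (ha : c ≤ a i₀) (hb : c ≤ b i₀) :
    c + ∑ i, min (a i) 0 + ∑ i, min (b i) 0 ≤ ∑ i, min (a i) (b i) := by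
  calc c + ∑ i, min (a i) 0 + ∑ i, min (b i) 0
      = ∑ i, ((if i = i₀ then c else 0) + (min (a i) 0 + min (b i) 0)) := by
        rw [sum_add_distrib, sum_add_distrib, sum_ite_eq' univ i₀, if_pos (mem_univ i₀), add_assoc]
    _ ≤ ∑ i, min (a i) (b i) := by
      refine sum_le_sum fun i _ => ?_
      rcases eq_or_ne i i₀ with rfl | hi
      · rw [if_pos rfl]
        exact add_min_zero_add_min_zero_le_min (le_min ha hb)
      · rw [if_neg hi, zero_add]
        exact min_zero_add_min_zero_le_min (a i) (b i)

end

theorem sum_min_rows_ge_general {N : ℕ} (α β : ℝ) (S : Matrix (Fin N) (Fin N) ℝ)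
    (hS : Admissible α β S) (p q : Fin N) (hpq : p ≠ q) :
    α - 2 * β ≤ ∑ i, min (S p i) (S q i) := by
  obtain ⟨-, hneg, hshare⟩ := hS
  obtain ⟨i₀, hp, hq⟩ := hshare p q hpq
  linarith [hneg p, hneg q, add_sum_min_zero_add_sum_min_zero_le_sum_min hp hq]

theorem sum_min_rows_ge {N : ℕ} (α β : ℝ) (hα : 0 < α ∧ α ≤ 1 / 2)
    (hβ : 0 ≤ β ∧ β < α / 2) (S : Matrix (Fin N) (Fin N) ℝ)
    (hS : Admissible α β S) (p q : Fin N) (hpq : p ≠ q) :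
    α - 2 * β ≤ ∑ i, min (S p i) (S q i) :=
  sum_min_rows_ge_general α β S hS p q hpq
end

section
/- Let α ∈ (0, 1/2], β ∈ [0, α/2), and let S be an (α,β)-admissible N×N real matrix. Then for every pair of distinct row indices p, q, it holds that (1/2) ∑_{i=1}^N |S_{pi} − S_{qi}| ≤ 1 − α + 2β; in particular the ergodic coefficient η(S) = max_{p≠q} (1/2)∑_i |S_{pi} − S_{qi}| satisfies η(S) ≤ 1 − α + 2β < 1. -/
/-!
Since both rows sum to `1`, half their `ℓ¹` distance is `1 - ∑ᵢ min (S p i) (S q i)`. In this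
overlap the shared column contributes at least `α`, and every other column at least
`min (S p i) 0 + min (S q i) 0`; these add up to at least `-2β` over both rows.
-/

open Finset

section Overlap

variable {R : Type*} [AddCommGroup R] [LinearOrder R] [IsOrderedAddMonoid R]

theorem abs_sub_eq_add_sub_two_nsmul_min (a b : R) : |a - b| = a + b - 2 • min a b := by
  rw [← max_sub_min_eq_abs', ← min_add_max a b, two_nsmul]
  abel

end Overlap

section Rows

variable {ι : Type*} [Fintype ι]

theorem sum_abs_sub_eq_sub_two_mul_sum_min (u v : ι → ℝ) :
    ∑ i, |u i - v i| = ∑ i, u i + ∑ i, v i - 2 * ∑ i, min (u i) (v i) := by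
  simp only [abs_sub_eq_add_sub_two_nsmul_min, nsmul_eq_mul, Nat.cast_ofNat]
  rw [sum_sub_distrib, sum_add_distrib, ← mul_sum]

theorem sub_two_mul_le_sum_min {u v : ι → ℝ} {α β : ℝ} {i₀ : ι}
    (hu : -β ≤ ∑ i, min (u i) 0) (hv : -β ≤ ∑ i, min (v i) 0)
    (hu₀ : α ≤ u i₀) (hv₀ : α ≤ v i₀) :
    α - 2 * β ≤ ∑ i, min (u i) (v i) := by
  have hgap : ∀ i, 0 ≤ min (u i) (v i) - (min (u i) 0 + min (v i) 0) := fun i =>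
    sub_nonneg.2 (min_zero_add_min_zero_le_min (u i) (v i))
  have hsingle := single_le_sum (fun i _ => hgap i) (mem_univ i₀)
  rw [sum_sub_distrib, sum_add_distrib] at hsingle
  have hneg₀ : min (u i₀) 0 + min (v i₀) 0 ≤ 0 :=
    add_nonpos (min_le_right _ _) (min_le_right _ _)
  linarith [le_min hu₀ hv₀]

end Rows

theorem ergodic_coefficient_bound_general {N : ℕ} (α β : ℝ)
    (hβ : 0 ≤ β ∧ β < α / 2) (S : Matrix (Fin N) (Fin N) ℝ)
    (hS : Admissible α β S) :
    (∀ p q : Fin N, p ≠ q →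
      (1 / 2 : ℝ) * ∑ i, |S p i - S q i| ≤ 1 - α + 2 * β) ∧ 1 - α + 2 * β < 1 := by
  obtain ⟨hrow, hneg, hshare⟩ := hS
  refine ⟨fun p q hpq => ?_, by linarith [hβ.2]⟩
  obtain ⟨i₀, hp, hq⟩ := hshare p q hpq
  have hoverlap := sub_two_mul_le_sum_min (hneg p) (hneg q) hp hq
  rw [sum_abs_sub_eq_sub_two_mul_sum_min, hrow p, hrow q]
  linarith

theorem ergodic_coefficient_bound {N : ℕ} (α β : ℝ) (hα : 0 < α ∧ α ≤ 1 / 2)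
    (hβ : 0 ≤ β ∧ β < α / 2) (S : Matrix (Fin N) (Fin N) ℝ)
    (hS : Admissible α β S) :
    (∀ p q : Fin N, p ≠ q →
      (1 / 2 : ℝ) * ∑ i, |S p i - S q i| ≤ 1 - α + 2 * β) ∧ 1 - α + 2 * β < 1 :=
  ergodic_coefficient_bound_general α β hβ S hS
end
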